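/- Let φ be a formula with no free variables, let A₁, …, Aₙ be agents (n ≥ 1), and let m be the sentence this x. ((A₁ signs x ∧ ⋯ ∧ Aₙ signs x) → φ). Then the formula (A₁ signs m ∧ ⋯ ∧ Aₙ signs m) → (A₁ says φ ∧ ⋯ ∧ Aₙ says φ) is derivable in the self-referential signature logic (n-party signature in counterparts). -/
import Mathlib


mutual
inductive STerm (Ag Pr Vr : Type) (Op : ℕ → Type) : Type where
  | var : Vr → STerm Ag Pr Vr Op
  | agent : Ag → STerm Ag Pr Vr Op
  | op : (n : ℕ) → Op n → (Fin n → STerm Ag Pr Vr Op) → STerm Ag Pr Vr Op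
  | ofFormula : SFormula Ag Pr Vr Op → STerm Ag Pr Vr Op

inductive SFormula (Ag Pr Vr : Type) (Op : ℕ → Type) : Type where
  | atom : Pr → SFormula Ag Pr Vr Op
  | neg : SFormula Ag Pr Vr Op → SFormula Ag Pr Vr Op
  | and : SFormula Ag Pr Vr Op → SFormula Ag Pr Vr Op → SFormula Ag Pr Vr Op
  | entails : STerm Ag Pr Vr Op → SFormula Ag Pr Vr Op → SFormula Ag Pr Vr Op
  | signs : Ag → STerm Ag Pr Vr Op → SFormula Ag Pr Vr Op
  | says : Ag → SFormula Ag Pr Vr Op → SFormula Ag Pr Vr Op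
  | self : Vr → SFormula Ag Pr Vr Op → SFormula Ag Pr Vr Op  -- `this x. φ`
end

namespace SFormula
variable {Ag Pr Vr : Type} {Op : ℕ → Type}
/-- `φ → ψ` abbreviates `¬(φ ∧ ¬ψ)`. -/
def imp (φ ψ : SFormula Ag Pr Vr Op) : SFormula Ag Pr Vr Op := .neg (.and φ (.neg ψ))
/-- `φ ↔ ψ` is the usual boolean abbreviation. -/
def iff (φ ψ : SFormula Ag Pr Vr Op) : SFormula Ag Pr Vr Op := .and (φ.imp ψ) (ψ.imp φ)
end SFormula

variable {Ag Pr Vr : Type} {Op : ℕ → Type} [DecidableEq Vr]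

mutual
/-- Substitution of the term `t` for the free occurrences of `x` in a term. -/
def substT (x : Vr) (t : STerm Ag Pr Vr Op) : STerm Ag Pr Vr Op → STerm Ag Pr Vr Op
  | .var y => if y = x then t else .var y
  | .agent A => .agent A
  | .op n o f => .op n o (fun i => substT x t (f i))
  | .ofFormula φ => .ofFormula (substF x t φ)
/-- Substitution of the term `t` for the free occurrences of `x` in a formula. -/
def substF (x : Vr) (t : STerm Ag Pr Vr Op) : SFormula Ag Pr Vr Op → SFormula Ag Pr Vr Op
  | .atom p => .atom p
  | .neg φ => .neg (substF x t φ)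
  | .and φ ψ => .and (substF x t φ) (substF x t ψ)
  | .entails u φ => .entails (substT x t u) (substF x t φ)
  | .signs A u => .signs A (substT x t u)
  | .says A φ => .says A (substF x t φ)
  | .self y φ => if y = x then .self y φ else .self y (substF x t φ)
end

mutual
/-- `x` occurs free in a term. -/
def FreeInT (x : Vr) : STerm Ag Pr Vr Op → Prop
  | .var y => y = x
  | .agent _ => False
  | .op n _ f => ∃ i : Fin n, FreeInT x (f i)
  | .ofFormula φ => FreeInF x φ
/-- `x` occurs free in a formula. -/
def FreeInF (x : Vr) : SFormula Ag Pr Vr Op → Prop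
  | .atom _ => False
  | .neg φ => FreeInF x φ
  | .and φ ψ => FreeInF x φ ∨ FreeInF x ψ
  | .entails u φ => FreeInT x u ∨ FreeInF x φ
  | .signs _ u => FreeInT x u
  | .says _ φ => FreeInF x φ
  | .self y φ => y ≠ x ∧ FreeInF x φ
end

/-- A sentence: a formula with no free variables. -/
def Sentence (φ : SFormula Ag Pr Vr Op) : Prop := ∀ x : Vr, ¬ FreeInF x φ

structure SModel (Ag Pr Vr : Type) (Op : ℕ → Type) (W : Type) where
  Rsig : W → Ag → STerm Ag Pr Vr Op → Prop
  Rent : STerm Ag Pr Vr Op → W → Prop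
  Rsays : W → Ag → W → Prop
  val : W → Pr → Prop

variable {W : Type}

/-- Semantic `this`-nesting depth of a formula (ignores terms). -/
def sdepth : SFormula Ag Pr Vr Op → ℕ
  | .atom _ => 0
  | .neg φ => sdepth φ
  | .and φ ψ => max (sdepth φ) (sdepth ψ)
  | .entails _ φ => sdepth φ
  | .signs _ _ => 0
  | .says _ φ => sdepth φ
  | .self _ φ => sdepth φ + 1

/-- Size of the formula structure (ignores terms). -/
def fsize : SFormula Ag Pr Vr Op → ℕ
  | .atom _ => 1
  | .neg φ => fsize φ + 1
  | .and φ ψ => fsize φ + fsize ψ + 1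
  | .entails _ φ => fsize φ + 1
  | .signs _ _ => 1
  | .says _ φ => fsize φ + 1
  | .self _ φ => fsize φ + 1

theorem sdepth_substF (x : Vr) (t : STerm Ag Pr Vr Op) :
    ∀ φ : SFormula Ag Pr Vr Op, sdepth (substF x t φ) = sdepth φ
  | .atom _ => rfl
  | .neg φ => by simp [substF, sdepth, sdepth_substF x t φ]
  | .and φ ψ => by simp [substF, sdepth, sdepth_substF x t φ, sdepth_substF x t ψ]
  | .entails u φ => by simp [substF, sdepth, sdepth_substF x t φ]
  | .signs _ _ => rfl
  | .says _ φ => by simp [substF, sdepth, sdepth_substF x t φ]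
  | .self y φ => by
      by_cases h : y = x <;> simp [substF, h, sdepth, sdepth_substF x t φ]

theorem fsize_pos : ∀ φ : SFormula Ag Pr Vr Op, 0 < fsize φ
  | .atom _ => Nat.zero_lt_one
  | .neg φ => Nat.succ_pos _
  | .and _ _ => Nat.succ_pos _
  | .entails _ _ => Nat.succ_pos _
  | .signs _ _ => Nat.zero_lt_one
  | .says _ _ => Nat.succ_pos _
  | .self _ _ => Nat.succ_pos _

theorem lex_nat_of {a b c d : ℕ} (h : a < c ∨ (a = c ∧ b < d)) :
    Prod.Lex (fun x y : ℕ => x < y) (fun x y : ℕ => x < y) (a, b) (c, d) := by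
  rcases h with h | ⟨rfl, h⟩
  · exact Prod.Lex.left _ _ h
  · exact Prod.Lex.right _ h

/-- Satisfaction for the self-referential signature logic. -/
def SatS (M : SModel Ag Pr Vr Op W) : W → SFormula Ag Pr Vr Op → Prop
  | w, .atom p => M.val w p
  | w, .neg φ => ¬ SatS M w φ
  | w, .and φ ψ => SatS M w φ ∧ SatS M w ψ
  | w, .entails t φ => ∀ w' : W, M.Rent t w' → SatS M w' φ
  | w, .signs A t => M.Rsig w A t
  | w, .says A φ => ∀ w' : W, M.Rsays w A w' → SatS M w' φ
  | w, .self x φ => SatS M w (substF x (.ofFormula (.self x φ)) φ)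
termination_by w φ => (sdepth φ, fsize φ)
decreasing_by
  all_goals simp only [sdepth, fsize, sdepth_substF]
  all_goals exact lex_nat_of (by omega)

def ValidS (M : SModel Ag Pr Vr Op W) (φ : SFormula Ag Pr Vr Op) : Prop :=
  ∀ w : W, SatS M w φ

/-- `φ` is a substitution instance of a propositional tautology. -/
def IsTautS (φ : SFormula Ag Pr Vr Op) : Prop :=
  ∀ v : SFormula Ag Pr Vr Op → Bool,
    (∀ ψ, v (.neg ψ) = !(v ψ)) →
    (∀ ψ χ, v (.and ψ χ) = (v ψ && v χ)) →
    v φ = true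

/-- Derivability in the self-referential signature logic (Ax1–Ax8, R1–R3). -/
inductive DerivS {Ag Pr Vr : Type} {Op : ℕ → Type} [DecidableEq Vr] :
    SFormula Ag Pr Vr Op → Prop where
  | ax1 {φ} : IsTautS φ → DerivS φ
  | ax2 (φ : SFormula Ag Pr Vr Op) : DerivS (.entails (.ofFormula φ) φ)
  | ax3 (t : STerm Ag Pr Vr Op) (φ ψ) :
      DerivS (((SFormula.entails t φ).and (.entails t (φ.imp ψ))).imp (.entails t ψ))
  | ax4 (A : Ag) (t : STerm Ag Pr Vr Op) (φ) :
      DerivS (((SFormula.signs A t).and (.entails t φ)).imp (.says A φ))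
  | ax5 (A : Ag) (φ ψ) :
      DerivS (((SFormula.says A φ).and (.says A (φ.imp ψ))).imp (.says A ψ))
  | ax6 (A B : Ag) (t : STerm Ag Pr Vr Op) :
      DerivS ((SFormula.signs B t).imp (.says A (.signs B t)))
  | ax7 (A : Ag) (t : STerm Ag Pr Vr Op) (φ) :
      DerivS ((SFormula.entails t φ).imp (.says A (.entails t φ)))
  | ax8 (x : Vr) (φ : SFormula Ag Pr Vr Op) :
      DerivS ((SFormula.self x φ).iff (substF x (.ofFormula (.self x φ)) φ))
  | r1 {φ ψ} : DerivS φ → DerivS (φ.imp ψ) → DerivS ψ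
  | r2 (t : STerm Ag Pr Vr Op) {φ} : DerivS φ → DerivS (.entails t φ)
  | r3 (A : Ag) {φ} : DerivS φ → DerivS (.says A φ)

/-- SC1 for the self-referential logic. -/
def SC1S (M : SModel Ag Pr Vr Op W) : Prop :=
  ∀ (φ : SFormula Ag Pr Vr Op) (w : W), M.Rent (.ofFormula φ) w → SatS M w φ

/-- SC2 for the self-referential logic. -/
def SC2S (M : SModel Ag Pr Vr Op W) : Prop :=
  ∀ (w : W) (A : Ag) (t : STerm Ag Pr Vr Op) (w' : W),
    M.Rsig w A t → M.Rsays w A w' → M.Rent t w'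

/-- SC3 for the self-referential logic. -/
def SC3S (M : SModel Ag Pr Vr Op W) : Prop :=
  ∀ (w : W) (A B : Ag) (t : STerm Ag Pr Vr Op) (w' : W),
    M.Rsig w B t → M.Rsays w A w' → M.Rsig w' B t

/-- The semantic operator `[G]` corresponding to `G says`, on sets of worlds. -/
def GStepS (M : SModel Ag Pr Vr Op W) (G : Finset Ag) (X : Set W) : Set W :=
  {w | ∀ A ∈ G, ∀ w' : W, M.Rsays w A w' → w' ∈ X}

/-- The set of worlds of `M` at which `G says^k φ` holds (`k ≥ 1`). -/
def GSaysKS (M : SModel Ag Pr Vr Op W) (G : Finset Ag) (φ : SFormula Ag Pr Vr Op)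
    (k : ℕ) : Set W :=
  (GStepS M G)^[k] {w | SatS M w φ}

/-- The set of worlds of `M` at which `G saysᵂ φ` holds. -/
def GSaysOmegaS (M : SModel Ag Pr Vr Op W) (G : Finset Ag) (φ : SFormula Ag Pr Vr Op) :
    Set W :=
  {w | ∀ k ≥ 1, w ∈ GSaysKS M G φ k}

/-- Child relation of the semantic tree: `Child M e' e` holds when the satisfaction
expression `e'` occurs on the right-hand side of the defining clause for `e`. -/
inductive Child (M : SModel Ag Pr Vr Op W) :
    W × SFormula Ag Pr Vr Op → W × SFormula Ag Pr Vr Op → Prop where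
  | neg {w φ} : Child M (w, φ) (w, .neg φ)
  | andL {w φ ψ} : Child M (w, φ) (w, .and φ ψ)
  | andR {w φ ψ} : Child M (w, ψ) (w, .and φ ψ)
  | entails {w w' t φ} : M.Rent t w' → Child M (w', φ) (w, .entails t φ)
  | says {w w' A φ} : M.Rsays w A w' → Child M (w', φ) (w, .says A φ)
  | self {w x φ} : Child M (w, substF x (.ofFormula (.self x φ)) φ) (w, .self x φ)

/-- The semantic tree rooted at `e` has height at most `n`. -/
def HtLE (M : SModel Ag Pr Vr Op W) : ℕ → W × SFormula Ag Pr Vr Op → Prop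
  | 0, e => ∀ e', ¬ Child M e' e
  | n + 1, e => ∀ e', Child M e' e → HtLE M n e'

/-- `F 0 ∧ (F 1 ∧ (⋯ ∧ F n))`: conjunction of a nonempty family of formulas. -/
def finConj : {n : ℕ} → (Fin (n + 1) → SFormula Ag Pr Vr Op) → SFormula Ag Pr Vr Op
  | 0, F => F 0
  | _ + 1, F => .and (F 0) (finConj (fun i => F i.succ))

/-! ### Auxiliary tautologies -/

theorem tautId (a : SFormula Ag Pr Vr Op) : IsTautS (a.imp a) := by
  intro v hn ha
  simp only [SFormula.imp, hn, ha]
  cases v a <;> rfl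

theorem tautK (a b : SFormula Ag Pr Vr Op) : IsTautS (a.imp (b.imp a)) := by
  intro v hn ha
  simp only [SFormula.imp, hn, ha]
  cases v a <;> cases v b <;> rfl

theorem tautS (a b c : SFormula Ag Pr Vr Op) :
    IsTautS ((a.imp (b.imp c)).imp ((a.imp b).imp (a.imp c))) := by
  intro v hn ha
  simp only [SFormula.imp, hn, ha]
  cases v a <;> cases v b <;> cases v c <;> rfl

theorem tautTrans (a b c : SFormula Ag Pr Vr Op) :
    IsTautS ((a.imp b).imp ((b.imp c).imp (a.imp c))) := by
  intro v hn ha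
  simp only [SFormula.imp, hn, ha]
  cases v a <;> cases v b <;> cases v c <;> rfl

theorem tautAndL (a b : SFormula Ag Pr Vr Op) : IsTautS ((a.and b).imp a) := by
  intro v hn ha
  simp only [SFormula.imp, hn, ha]
  cases v a <;> cases v b <;> rfl

theorem tautAndR (a b : SFormula Ag Pr Vr Op) : IsTautS ((a.and b).imp b) := by
  intro v hn ha
  simp only [SFormula.imp, hn, ha]
  cases v a <;> cases v b <;> rfl

theorem tautAndI (a b : SFormula Ag Pr Vr Op) : IsTautS (a.imp (b.imp (a.and b))) := by
  intro v hn ha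
  simp only [SFormula.imp, hn, ha]
  cases v a <;> cases v b <;> rfl

theorem tautCurry (a b c : SFormula Ag Pr Vr Op) :
    IsTautS (((a.and b).imp c).imp (a.imp (b.imp c))) := by
  intro v hn ha
  simp only [SFormula.imp, hn, ha]
  cases v a <;> cases v b <;> cases v c <;> rfl

/-! ### Derived rules -/

theorem DerivS.dax {H a : SFormula Ag Pr Vr Op} (h : DerivS a) : DerivS (H.imp a) :=
  DerivS.r1 h (DerivS.ax1 (tautK a H))

theorem DerivS.dmp {H a b : SFormula Ag Pr Vr Op} (hab : DerivS (H.imp (a.imp b)))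
    (ha : DerivS (H.imp a)) : DerivS (H.imp b) :=
  DerivS.r1 ha (DerivS.r1 hab (DerivS.ax1 (tautS H a b)))

theorem DerivS.trans {a b c : SFormula Ag Pr Vr Op} (hab : DerivS (a.imp b))
    (hbc : DerivS (b.imp c)) : DerivS (a.imp c) :=
  DerivS.r1 hbc (DerivS.r1 hab (DerivS.ax1 (tautTrans a b c)))

theorem DerivS.curry {a b c : SFormula Ag Pr Vr Op} (h : DerivS ((a.and b).imp c)) :
    DerivS (a.imp (b.imp c)) :=
  DerivS.r1 h (DerivS.ax1 (tautCurry a b c))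

/-- K-style reasoning under `says` under a hypothesis `H`. -/
theorem DerivS.saysMP {H : SFormula Ag Pr Vr Op} {B : Ag} {a b : SFormula Ag Pr Vr Op}
    (ha : DerivS (H.imp (.says B a))) (hab : DerivS (H.imp (.says B (a.imp b)))) :
    DerivS (H.imp (.says B b)) :=
  DerivS.dmp (DerivS.dmp (DerivS.dax (DerivS.curry (DerivS.ax5 B a b))) ha) hab

/-! ### Properties of `finConj` -/

theorem finConj_proj : ∀ (n : ℕ) (F : Fin (n + 1) → SFormula Ag Pr Vr Op) (i : Fin (n + 1)),
    DerivS ((finConj F).imp (F i))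
  | 0, F, i => by
      have : i = 0 := Fin.fin_one_eq_zero i
      subst this
      exact DerivS.ax1 (tautId (F 0))
  | n + 1, F, i => by
      refine Fin.cases ?_ (fun j => ?_) i
      · exact DerivS.ax1 (tautAndL (F 0) (finConj fun i => F i.succ))
      · exact DerivS.trans (DerivS.ax1 (tautAndR (F 0) (finConj fun i => F i.succ)))
          (finConj_proj n (fun i => F i.succ) j)

theorem finConj_intro {H : SFormula Ag Pr Vr Op} :
    ∀ (n : ℕ) (F : Fin (n + 1) → SFormula Ag Pr Vr Op),
    (∀ i, DerivS (H.imp (F i))) → DerivS (H.imp (finConj F))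
  | 0, F, h => h 0
  | n + 1, F, h => by
      have h0 := h 0
      have ht := finConj_intro n (fun i => F i.succ) (fun i => h i.succ)
      exact DerivS.dmp (DerivS.dmp
        (DerivS.dax (DerivS.ax1 (tautAndI (F 0) (finConj fun i => F i.succ)))) h0) ht

theorem finConj_says_intro {H : SFormula Ag Pr Vr Op} {B : Ag} :
    ∀ (n : ℕ) (F : Fin (n + 1) → SFormula Ag Pr Vr Op),
    (∀ i, DerivS (H.imp (.says B (F i)))) → DerivS (H.imp (.says B (finConj F)))
  | 0, F, h => h 0
  | n + 1, F, h => by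
      have h0 := h 0
      have ht := finConj_says_intro n (fun i => F i.succ) (fun i => h i.succ)
      have hk : DerivS (H.imp (SFormula.says B
          ((F 0).imp ((finConj fun i => F i.succ).imp
            ((F 0).and (finConj fun i => F i.succ)))))) :=
        DerivS.dax (DerivS.r3 B (DerivS.ax1 (tautAndI _ _)))
      exact DerivS.saysMP ht (DerivS.saysMP h0 hk)

/-! ### Substitution lemmas -/

mutual
theorem substT_eq_of_not_free (x : Vr) (t : STerm Ag Pr Vr Op) :
    ∀ u : STerm Ag Pr Vr Op, ¬ FreeInT x u → substT x t u = u
  | .var y, h => by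
      simp only [FreeInT] at h
      simp [substT, h]
  | .agent _, _ => rfl
  | .op n o f, h => by
      simp only [FreeInT, not_exists] at h
      simp only [substT]
      congr 1
      funext i
      exact substT_eq_of_not_free x t (f i) (h i)
  | .ofFormula ψ, h => by
      simp only [FreeInT] at h
      simp only [substT, substF_eq_of_not_free x t ψ h]

theorem substF_eq_of_not_free (x : Vr) (t : STerm Ag Pr Vr Op) :
    ∀ ψ : SFormula Ag Pr Vr Op, ¬ FreeInF x ψ → substF x t ψ = ψ
  | .atom _, _ => rfl
  | .neg ψ, h => by
      simp only [FreeInF] at h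
      simp only [substF, substF_eq_of_not_free x t ψ h]
  | .and ψ χ, h => by
      simp only [FreeInF, not_or] at h
      simp only [substF, substF_eq_of_not_free x t ψ h.1, substF_eq_of_not_free x t χ h.2]
  | .entails u ψ, h => by
      simp only [FreeInF, not_or] at h
      simp only [substF, substT_eq_of_not_free x t u h.1, substF_eq_of_not_free x t ψ h.2]
  | .signs _ u, h => by
      simp only [FreeInF] at h
      simp only [substF, substT_eq_of_not_free x t u h]
  | .says _ ψ, h => by
      simp only [FreeInF] at h
      simp only [substF, substF_eq_of_not_free x t ψ h]
  | .self y ψ, h => by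
      by_cases hyx : y = x
      · simp [substF, hyx]
      · simp only [FreeInF, not_and] at h
        simp [substF, hyx, substF_eq_of_not_free x t ψ (h hyx)]
end

theorem substF_finConj_signs (x : Vr) (t : STerm Ag Pr Vr Op) :
    ∀ (n : ℕ) (A : Fin (n + 1) → Ag),
    substF x t (finConj (fun i => SFormula.signs (A i) (.var x)))
      = finConj (fun i => SFormula.signs (A i) t)
  | 0, A => by simp [finConj, substF, substT]
  | n + 1, A => by
      simp only [finConj, substF, substT, if_pos rfl]
      exact congrArg _ (substF_finConj_signs x t n (fun i => A i.succ))

/-- The core derivation: if `m ↔ (H → φ)` is derivable where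
`H = (A₁ signs m ∧ ⋯ ∧ Aₙ signs m)`, then `H → (A₁ says φ ∧ ⋯ ∧ Aₙ says φ)`
is derivable. -/
theorem counterparts_aux (n : ℕ) (A : Fin (n + 1) → Ag)
    (m φ : SFormula Ag Pr Vr Op) {H : SFormula Ag Pr Vr Op}
    (hH : H = finConj (fun i => SFormula.signs (A i) (.ofFormula m)))
    (hiff : DerivS (m.iff (H.imp φ))) :
    DerivS (H.imp (finConj (fun i => SFormula.says (A i) φ))) := by
  -- projections: H implies each signature
  have h1 : ∀ i, DerivS (H.imp (.signs (A i) (.ofFormula m))) := by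
    intro i
    rw [hH]
    exact finConj_proj n _ i
  -- each agent says m
  have hsaysm : ∀ i, DerivS (H.imp (.says (A i) m)) := fun i =>
    DerivS.dmp (DerivS.trans (h1 i) (DerivS.curry (DerivS.ax4 (A i) (.ofFormula m) m)))
      (DerivS.dax (DerivS.ax2 m))
  -- each agent says that each agent signs m
  have hsayssigns : ∀ i j, DerivS (H.imp (.says (A i) (.signs (A j) (.ofFormula m)))) :=
    fun i j => DerivS.trans (h1 j) (DerivS.ax6 (A i) (A j) (.ofFormula m))
  -- each agent says H
  have hsaysH : ∀ i, DerivS (H.imp (.says (A i) H)) := by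
    intro i
    have h := finConj_says_intro n (fun j => SFormula.signs (A j) (.ofFormula m))
      (hsayssigns i)
    rwa [← hH] at h
  -- each agent says (m → (H → φ))
  have hmimp : DerivS (m.imp (H.imp φ)) :=
    DerivS.r1 hiff (DerivS.ax1 (tautAndL (m.imp (H.imp φ)) ((H.imp φ).imp m)))
  have hsaysiff : ∀ i, DerivS (H.imp (.says (A i) (m.imp (H.imp φ)))) := fun i =>
    DerivS.dax (DerivS.r3 (A i) hmimp)
  -- each agent says φ
  have hsaysφ : ∀ i, DerivS (H.imp (.says (A i) φ)) := fun i =>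
    DerivS.saysMP (hsaysH i) (DerivS.saysMP (hsaysm i) (hsaysiff i))
  exact finConj_intro n _ hsaysφ

/-- `n`-party signature in counterparts: for
`m = this x. ((A₁ signs x ∧ ⋯ ∧ Aₙ signs x) → φ)` with `φ` closed, the formula
`(A₁ signs m ∧ ⋯ ∧ Aₙ signs m) → (A₁ says φ ∧ ⋯ ∧ Aₙ says φ)` is derivable. -/
theorem counterparts_correct_n_party (n : ℕ) (A : Fin (n + 1) → Ag) (x : Vr)
    (φ : SFormula Ag Pr Vr Op) (hφ : Sentence φ) (m : SFormula Ag Pr Vr Op)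
    (hm : m = .self x ((finConj (fun i => SFormula.signs (A i) (.var x))).imp φ)) :
    DerivS ((finConj (fun i => SFormula.signs (A i) (.ofFormula m))).imp
      (finConj (fun i => SFormula.says (A i) φ))) := by
  have hiff : DerivS (m.iff
      ((finConj (fun i => SFormula.signs (A i) (.ofFormula m))).imp φ)) := by
    have h := DerivS.ax8 x ((finConj (fun i => SFormula.signs (A i) (.var x))).imp φ)
      (Ag := Ag) (Pr := Pr) (Op := Op)
    have heq : substF x (.ofFormula (.self x
          ((finConj (fun i => SFormula.signs (A i) (.var x))).imp φ)))
        ((finConj (fun i => SFormula.signs (A i) (.var x))).imp φ)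
        = (finConj (fun i => SFormula.signs (A i)
            (.ofFormula (.self x
              ((finConj (fun i => SFormula.signs (A i) (.var x))).imp φ))))).imp φ := by
      show substF x _ (.neg (.and _ (.neg φ))) = _
      simp only [substF, substF_finConj_signs, substF_eq_of_not_free x _ φ (hφ x)]
      rfl
    rw [heq] at h
    rw [hm]
    exact h
  exact counterparts_aux n A m φ rfl hiff
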